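/- For ordinals α, β, γ with ℓ(α) < β: if α < γ and β ≤ ℓ(γ), then α + ω^β ≤ γ. Consequently, in the Ignatiev semilattice, the meet of α and β at coordinate i equals max(αᵢ,βᵢ) + ω^{δ_{i+1}} whenever ℓ(max(αᵢ,βᵢ)) < δ_{i+1}, where δ is the meet sequence computed by downward recursion. -/

import Mathlib

open Ordinal

/-- `ell β` is the exponent of the last (smallest) term of the Cantor normal
form of `β` (base ω), with `ell 0 = 0`. -/
noncomputable def ell (b : Ordinal) : Ordinal :=
  ((Ordinal.CNF omega0 b).map Prod.fst).getLastD 0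

/-- `ε₀`, the least ordinal `α` with `ω ^ α = α`. -/
noncomputable def eps0 : Ordinal := Ordinal.nfp (fun a => omega0 ^ a) 0

/-- Membership in the Ignatiev set `I`: sequences of ordinals below `ε₀` with
`α (i+1) ≤ ℓ (α i)` for all `i`. -/
def IgMem (a : ℕ → Ordinal) : Prop :=
  (∀ i, a i < eps0) ∧ ∀ i, a (i + 1) ≤ ell (a i)

/-!
`ℓ(γ)` is the largest `e` with `ω^e ∣ γ`: peel off the leading term of the Cantor normal form.
So `α < γ = ω^β · q` gives `α / ω^β < q`, and since `ω^β` absorbs the remainder `α % ω^β`,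
`α + ω^β = ω^β · (α / ω^β + 1) ≤ γ`. For the meet: if `ℓ(max(αᵢ, βᵢ)) < δᵢ₊₁` then
`max(αᵢ, βᵢ) < δᵢ`, so `max(αᵢ, βᵢ) + ω^{δᵢ₊₁} ≤ δᵢ`; replacing `δᵢ` by this value keeps `δ` in the
Ignatiev set (its `ℓ` is exactly `δᵢ₊₁`), and minimality of the meet forces equality.
-/

lemma ell_of_ne_zero {y : Ordinal} (hy : y ≠ 0) :
    ell y = if y % ω ^ log ω y = 0 then log ω y else ell (y % ω ^ log ω y) := by
  unfold ell
  rw [CNF.ne_zero hy]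
  split_ifs with h
  · simp [h]
  · have hne : (CNF ω (y % ω ^ log ω y)).map Prod.fst ≠ [] := by simp [CNF.ne_zero h]
    rw [List.map_cons, List.getLastD_cons, List.getLastD_eq_getLast?, List.getLastD_eq_getLast?,
      List.getLast?_eq_some_getLast hne]
    rfl

lemma opow_dvd_iff_le_log_and_dvd_mod {b o e : Ordinal} (hb : 1 < b) (ho : o ≠ 0) :
    b ^ e ∣ o ↔ e ≤ log b o ∧ b ^ e ∣ o % b ^ log b o := by
  have split_dvd (he : e ≤ log b o) : b ^ e ∣ o ↔ b ^ e ∣ o % b ^ log b o := by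
    have := dvd_add_iff (c := o % b ^ log b o)
      ((opow_dvd_opow b he).mul_right (o / b ^ log b o))
    rwa [div_add_mod] at this
  constructor
  · intro h
    have he : e ≤ log b o := (opow_le_iff_le_log hb ho).1 (le_of_dvd ho h)
    exact ⟨he, (split_dvd he).1 h⟩
  · rintro ⟨he, h⟩
    exact (split_dvd he).2 h

lemma omega0_opow_dvd_iff_le_ell {y : Ordinal} (hy : y ≠ 0) (e : Ordinal) :
    ω ^ e ∣ y ↔ e ≤ ell y := by
  induction y using CNF.rec ω with
  | H0 => exact absurd rfl hy
  | H y hy IH =>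
    rw [opow_dvd_iff_le_log_and_dvd_mod one_lt_omega0 hy, ell_of_ne_zero hy]
    split_ifs with hr
    · simp [hr]
    · rw [← IH hr, and_iff_right_iff_imp]
      intro h
      have : ω ^ e < ω ^ log ω y :=
        (le_of_dvd hr h).trans_lt (mod_lt _ (opow_ne_zero _ omega0_ne_zero))
      exact ((opow_lt_opow_iff_right one_lt_omega0).1 this).le

lemma add_omega0_opow_eq_mul (x b : Ordinal) : x + ω ^ b = ω ^ b * (x / ω ^ b + 1) := by
  conv_lhs => rw [← div_add_mod x (ω ^ b)]
  rw [add_assoc, add_omega0_opow (mod_lt _ (opow_ne_zero _ omega0_ne_zero)), mul_add, mul_one]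

lemma add_omega0_opow_le_of_dvd {a b g : Ordinal} (hag : a < g) (hdvd : ω ^ b ∣ g) :
    a + ω ^ b ≤ g := by
  obtain ⟨q, rfl⟩ := hdvd
  have hq : a / ω ^ b < q := (lt_mul_iff_div_lt (opow_ne_zero _ omega0_ne_zero)).1 hag
  rw [add_omega0_opow_eq_mul]
  exact mul_le_mul_right (Order.add_one_le_iff.2 hq) _

lemma add_omega0_opow_le {a b g : Ordinal} (hag : a < g) (hb : b ≤ ell g) : a + ω ^ b ≤ g :=
  add_omega0_opow_le_of_dvd hag
    ((omega0_opow_dvd_iff_le_ell (pos_of_gt hag).ne' b).2 hb)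

lemma ell_add_omega0_opow (x b : Ordinal) : ell (x + ω ^ b) = b := by
  have hne : x + ω ^ b ≠ 0 := ((opow_pos b omega0_pos).trans_le le_add_self).ne'
  have hdvd := add_omega0_opow_eq_mul x b
  refine le_antisymm ?_ ((omega0_opow_dvd_iff_le_ell hne b).1 ⟨_, hdvd⟩)
  by_contra! hlt
  have hsucc : ω ^ b * ω ∣ ω ^ b * (x / ω ^ b + 1) := by
    rw [← opow_succ, ← hdvd, omega0_opow_dvd_iff_le_ell hne]
    exact Order.succ_le_of_lt hlt
  rw [mul_dvd_mul_iff_left (opow_ne_zero _ omega0_ne_zero),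
    ← isSuccPrelimit_iff_omega0_dvd] at hsucc
  exact Order.not_isSuccPrelimit_add_one _ hsucc

lemma omega0_opow_eps0 : ω ^ eps0 = eps0 :=
  nfp_fp (isNormal_opow one_lt_omega0) 0

lemma omega0_opow_lt_eps0 {x : Ordinal} (hx : x < eps0) : ω ^ x < eps0 := by
  simpa only [omega0_opow_eps0] using (opow_lt_opow_iff_right one_lt_omega0).2 hx

lemma add_lt_eps0 {x y : Ordinal} (hx : x < eps0) (hy : y < eps0) : x + y < eps0 := by
  rw [← omega0_opow_eps0] at hx hy ⊢
  exact isPrincipal_add_omega0_opow _ hx hy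

lemma IgMem.update {d : ℕ → Ordinal} (hd : IgMem d) {i : ℕ} {v : Ordinal} (hv : v < eps0)
    (hvd : v ≤ d i) (hell : d (i + 1) ≤ ell v) : IgMem (Function.update d i v) := by
  refine ⟨fun n => ?_, fun n => ?_⟩
  · rcases eq_or_ne n i with rfl | hn
    · simpa using hv
    · simpa [hn] using hd.1 n
  · rcases eq_or_ne n i with rfl | hn
    · simpa using hell
    rcases eq_or_ne (n + 1) i with rfl | hn1
    · simpa [hn] using hvd.trans (hd.2 n)
    · simpa [hn, hn1] using hd.2 n

/-- (1) If `ℓ(α) < β`, `α < γ` and `β ≤ ℓ(γ)` then `α + ω^β ≤ γ`.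
(2) Consequently, the meet `δ` of `α, β ∈ I` satisfies
`δᵢ = max(αᵢ, βᵢ) + ω^{δ_{i+1}}` whenever `ℓ(max(αᵢ, βᵢ)) < δ_{i+1}`. -/
theorem stmt_16 :
    (∀ a b g : Ordinal, ell a < b → a < g → b ≤ ell g → a + omega0 ^ b ≤ g) ∧
    (∀ a b d : ℕ → Ordinal, IgMem a → IgMem b →
      (IgMem d ∧ (∀ n, max (a n) (b n) ≤ d n) ∧
        ∀ c : ℕ → Ordinal, IgMem c → (∀ n, max (a n) (b n) ≤ c n) →
          ∀ n, d n ≤ c n) →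
      ∀ i, ell (max (a i) (b i)) < d (i + 1) →
        d i = max (a i) (b i) + omega0 ^ d (i + 1)) := by
  refine ⟨fun a b g _ hag hb => add_omega0_opow_le hag hb, ?_⟩
  rintro a b d ha hb ⟨hd, hdub, hdmin⟩ i hlt
  set m := max (a i) (b i)
  set v := m + ω ^ d (i + 1)
  have hmd : m < d i := (hdub i).lt_of_ne fun h => (hd.2 i).not_gt (h ▸ hlt)
  have hvd : v ≤ d i := add_omega0_opow_le hmd (hd.2 i)
  have hc : IgMem (Function.update d i v) :=
    hd.update (add_lt_eps0 (max_lt (ha.1 i) (hb.1 i)) (omega0_opow_lt_eps0 (hd.1 (i + 1)))) hvd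
      (ell_add_omega0_opow _ _).ge
  have hcub : ∀ n, max (a n) (b n) ≤ Function.update d i v n := by
    intro n
    rcases eq_or_ne n i with rfl | hn
    · rw [Function.update_self]
      exact le_self_add
    · simpa [hn] using hdub n
  exact (hdmin _ hc hcub i |>.trans_eq (Function.update_self ..)).antisymm hvd
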